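/- arXiv:1910.12772 — 2 statements merged into one kernel-verified Lean document; each statement's English description precedes it below -/
import Mathlib

section
/- Assume additionally that f_D ≥ 0 on [0,y₁]. Then f_D(y) → ∞ as y → ∞, and the limit ψ(λ) := lim_{y→∞} f_N(y)/f_D(y) exists and equals (λ ∫_{[0,y₁]} f_N(z) m̂(dz)) / (1 + λ ∫_{[0,y₁]} f_D(z) m̂(dz)). -/
/-!
Since `m̂` carries no mass beyond `y₁`, the inner integral `∫_{[0,y']} f dm̂` is constant
for `y' ≥ y₁`, so on `[y₁, ∞)` both `f_N` and `f_D` are affine, with slopes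
`λ ∫_{[0,y₁]} f_N dm̂` and `1 + λ ∫_{[0,y₁]} f_D dm̂ ≥ 1`. Hence `f_D → ∞`, and `f_N / f_D`
tends to the ratio of the slopes.
-/

open MeasureTheory Filter Topology Set

section IntegralUpTo

variable {μ : Measure ℝ} {f : ℝ → ℝ} {a b : ℝ}

lemma measure_Icc_lt_top_of_measure_Ioi_eq_zero (hsupp : μ (Ioi b) = 0)
    (hfin : μ (Icc a b) < ⊤) (t : ℝ) : μ (Icc a t) < ⊤ :=
  calc μ (Icc a t) ≤ μ (Icc a b ∪ Ioi b) := by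
        refine measure_mono fun x hx => ?_
        rcases le_or_gt x b with h | h
        · exact Or.inl ⟨hx.1, h⟩
        · exact Or.inr h
    _ ≤ μ (Icc a b) + μ (Ioi b) := measure_union_le _ _
    _ < ⊤ := by rw [hsupp, add_zero]; exact hfin

lemma setIntegral_Icc_eq_of_measure_Ioi_eq_zero (hsupp : μ (Ioi b) = 0) {y : ℝ} (hy : b ≤ y) :
    ∫ z in Icc a y, f z ∂μ = ∫ z in Icc a b, f z ∂μ := by
  refine setIntegral_congr_set (ae_eq_set.2 ⟨measure_mono_null (fun x hx => ?_) hsupp, ?_⟩)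
  · exact lt_of_not_ge fun hxb => hx.2 ⟨hx.1.1, hxb⟩
  · rw [sdiff_eq_empty.2 (Icc_subset_Icc_right hy), measure_empty]

lemma monotone_setIntegral_Icc (hf : ∀ t, IntegrableOn f (Icc a t) μ) (hf0 : ∀ z, 0 ≤ f z) :
    Monotone fun t => ∫ z in Icc a t, f z ∂μ := fun _ t hst =>
  setIntegral_mono_set (hf t) (ae_of_all _ hf0) (Icc_subset_Icc_right hst).eventuallyLE

/-- `t ↦ ∫_{[a,t]} f dμ` is a difference of two monotone functions, by splitting `f` into its
positive and negative parts. -/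
lemma intervalIntegrable_setIntegral_Icc (hf : ∀ t, IntegrableOn f (Icc a t) μ) (c d : ℝ) :
    IntervalIntegrable (fun t => ∫ z in Icc a t, f z ∂μ) volume c d := by
  have hpos : ∀ t, IntegrableOn (fun z => max (f z) 0) (Icc a t) μ := fun t => (hf t).pos_part
  have hneg : ∀ t, IntegrableOn (fun z => max (-f z) 0) (Icc a t) μ := fun t => (hf t).neg_part
  have hsplit : (fun t => ∫ z in Icc a t, f z ∂μ) = fun t =>
      (∫ z in Icc a t, max (f z) 0 ∂μ) - ∫ z in Icc a t, max (-f z) 0 ∂μ := by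
    funext t
    rw [← integral_sub (hpos t) (hneg t)]
    refine integral_congr_ae (ae_of_all _ fun z => ?_)
    rcases le_total (f z) 0 with h | h <;> simp [h]
  rw [hsplit]
  exact (monotone_setIntegral_Icc hpos fun _ => le_max_right _ _).intervalIntegrable.sub
    (monotone_setIntegral_Icc hneg fun _ => le_max_right _ _).intervalIntegrable

lemma intervalIntegral_setIntegral_Icc_eq_add_mul (hf : ∀ t, IntegrableOn f (Icc a t) μ)
    (hsupp : μ (Ioi b) = 0) {y : ℝ} (hy : b ≤ y) :
    ∫ y' in a..y, ∫ z in Icc a y', f z ∂μ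
      = (∫ y' in a..b, ∫ z in Icc a y', f z ∂μ) + (y - b) * ∫ z in Icc a b, f z ∂μ := by
  rw [← intervalIntegral.integral_add_adjacent_intervals (intervalIntegrable_setIntegral_Icc hf a b)
    (intervalIntegrable_setIntegral_Icc hf b y)]
  have hconst : ∫ y' in b..y, ∫ z in Icc a y', f z ∂μ = ∫ _ in b..y, ∫ z in Icc a b, f z ∂μ := by
    refine intervalIntegral.integral_congr fun x hx => ?_
    rw [uIcc_of_le hy] at hx
    exact setIntegral_Icc_eq_of_measure_Ioi_eq_zero hsupp hx.1
  rw [hconst, intervalIntegral.integral_const, smul_eq_mul]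

end IntegralUpTo

lemma tendsto_affine_div_affine (a b c d : ℝ) (hd : d ≠ 0) :
    Tendsto (fun t => (a + t * b) / (c + t * d)) atTop (𝓝 (b / d)) := by
  have hlim : Tendsto (fun t : ℝ => (a * t⁻¹ + b) / (c * t⁻¹ + d)) atTop
      (𝓝 ((a * 0 + b) / (c * 0 + d))) := by
    refine Tendsto.div ?_ ?_ (by simpa using hd) <;>
      exact (tendsto_inv_atTop_zero.const_mul _).add_const _
  rw [mul_zero, mul_zero, zero_add, zero_add] at hlim
  refine hlim.congr' ?_
  filter_upwards [eventually_gt_atTop 0] with t ht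
  field_simp

/-- if in addition `f_D ≥ 0` on `[0,y₁]`, then `f_D(y) → ∞` as `y → ∞`
and `ψ(λ) := lim_{y→∞} f_N(y)/f_D(y)` exists and equals
`(λ ∫_{[0,y₁]} f_N dm̂) / (1 + λ ∫_{[0,y₁]} f_D dm̂)`. -/
theorem statement12 (y₁ : ℝ) (hy₁ : 0 < y₁)
    (mhat : Measure ℝ)
    (hsupp : mhat (Ioi y₁) = 0) (hfin : mhat (Icc (0:ℝ) y₁) < ⊤)
    (lam : ℝ) (hlam : 0 < lam)
    (fN fD : ℝ → ℝ)
    (hfNc : ContinuousOn fN (Ici (0:ℝ))) (hfDc : ContinuousOn fD (Ici (0:ℝ)))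
    (hfN : ∀ y : ℝ, 0 ≤ y →
      fN y = 1 + lam * ∫ y' in (0:ℝ)..y, (∫ z in Icc (0:ℝ) y', fN z ∂mhat))
    (hfD : ∀ y : ℝ, 0 ≤ y →
      fD y = y + lam * ∫ y' in (0:ℝ)..y, (∫ z in Icc (0:ℝ) y', fD z ∂mhat))
    (hfDpos : ∀ z ∈ Icc (0:ℝ) y₁, 0 ≤ fD z) :
    Tendsto fD atTop atTop ∧
    Tendsto (fun y => fN y / fD y) atTop
      (𝓝 ((lam * ∫ z in Icc (0:ℝ) y₁, fN z ∂mhat)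
          / (1 + lam * ∫ z in Icc (0:ℝ) y₁, fD z ∂mhat))) := by
  have hint : ∀ {f : ℝ → ℝ}, ContinuousOn f (Ici 0) →
      ∀ t, IntegrableOn f (Icc 0 t) mhat :=
    fun hf t => (hf.mono fun _ hx => hx.1).integrableOn_of_subset_isCompact isCompact_Icc
      measurableSet_Icc Subset.rfl (measure_Icc_lt_top_of_measure_Ioi_eq_zero hsupp hfin t).ne
  set CN := ∫ z in Icc (0:ℝ) y₁, fN z ∂mhat
  set CD := ∫ z in Icc (0:ℝ) y₁, fD z ∂mhat
  have hCD : 0 ≤ CD := setIntegral_nonneg measurableSet_Icc hfDpos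
  have hslope : 0 < 1 + lam * CD := by positivity
  have hN : ∀ y ≥ y₁, fN y = fN y₁ + (y - y₁) * (lam * CN) := fun y hy => by
    rw [hfN y (hy₁.le.trans hy), hfN y₁ hy₁.le,
      intervalIntegral_setIntegral_Icc_eq_add_mul (hint hfNc) hsupp hy]
    ring
  have hD : ∀ y ≥ y₁, fD y = fD y₁ + (y - y₁) * (1 + lam * CD) := fun y hy => by
    rw [hfD y (hy₁.le.trans hy), hfD y₁ hy₁.le,
      intervalIntegral_setIntegral_Icc_eq_add_mul (hint hfDc) hsupp hy]
    ring
  have hshift : Tendsto (fun y => y - y₁) atTop atTop :=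
    tendsto_atTop_add_const_right _ _ tendsto_id
  constructor
  · refine (tendsto_atTop_add_const_left _ (fD y₁) (hshift.atTop_mul_const hslope)).congr' ?_
    filter_upwards [eventually_ge_atTop y₁] with y hy
    exact (hD y hy).symm
  · refine ((tendsto_affine_div_affine (fN y₁) _ (fD y₁) _ hslope.ne').comp hshift).congr' ?_
    filter_upwards [eventually_ge_atTop y₁] with y hy
    rw [Function.comp_apply, hN y hy, hD y hy]
end

section
/- Assume additionally that f_D ≥ 0 on [0,y₁], set ψ(λ) = (λ ∫_{[0,y₁]} f_N(z) m̂(dz)) / (1 + λ ∫_{[0,y₁]} f_D(z) m̂(dz)), φ = f_N − ψ(λ)·f_D, and m₁ = m̂({y₁}). Then ψ(λ) = λ ∫_{[0,y₁]} φ(z) m̂(dz), and the right derivative of φ satisfies lim_{y↑y₁} ∂_y⁺φ(y) = −λ·m₁·φ(y₁). -/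
/-!
Since `ψ (1 + λ ∫ f_D) = λ ∫ f_N`, linearity of the integral gives `ψ = λ ∫ φ`. Subtracting the
integral equations, `φ y = 1 - ψ y + λ ∫₀^y G` on `[0, y₁]`, where `G t = ∫_{[0,t]} φ dm̂` is
right-continuous; hence `∂⁺φ = -ψ + λ G`. As `y ↑ y₁`, `G y` tends to
`∫_{[0,y₁)} φ dm̂ = ∫_{[0,y₁]} φ dm̂ - m₁ φ y₁`, and the first identity turns the limit
`-ψ + λ (∫_{[0,y₁]} φ dm̂ - m₁ φ y₁)` into `-λ m₁ φ y₁`.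
-/

open MeasureTheory Filter Topology Set
open scoped ENNReal

namespace MeasureTheory

variable {α E : Type*} [MeasurableSpace α] [NormedAddCommGroup E] [NormedSpace ℝ E]
  {μ : Measure α} {f : α → E}

theorem tendsto_setIntegral_of_eventually_mem_iff {ι : Type*} {l : Filter ι}
    [l.IsCountablyGenerated] {s : ι → Set α} {t : Set α} (hf : Integrable f μ)
    (hs : ∀ i, MeasurableSet (s i)) (ht : MeasurableSet t)
    (h_lim : ∀ x, ∀ᶠ i in l, x ∈ s i ↔ x ∈ t) :
    Tendsto (fun i => ∫ x in s i, f x ∂μ) l (𝓝 (∫ x in t, f x ∂μ)) := by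
  simp only [← integral_indicator (hs _), ← integral_indicator ht]
  refine tendsto_integral_filter_of_dominated_convergence (fun x => ‖f x‖)
    (Eventually.of_forall fun i => hf.aestronglyMeasurable.indicator (hs i))
    (Eventually.of_forall fun i => ae_of_all _ fun x => norm_indicator_le_norm_self _ _)
    hf.norm (ae_of_all _ fun x => tendsto_const_nhds.congr' ?_)
  filter_upwards [h_lim x] with i hi
  by_cases hx : x ∈ t
  · rw [indicator_of_mem hx, indicator_of_mem (hi.2 hx)]
  · rw [indicator_of_notMem hx, indicator_of_notMem (mt hi.1 hx)]

end MeasureTheory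

noncomputable def cumulIntegral {E : Type*} [NormedAddCommGroup E] [NormedSpace ℝ E]
    (μ : Measure ℝ) (f : ℝ → E) (u : ℝ) : E :=
  ∫ z in Iic u, f z ∂μ

section CumulIntegral

variable {E : Type*} [NormedAddCommGroup E] [NormedSpace ℝ E] {μ : Measure ℝ} {f : ℝ → E}

theorem continuousWithinAt_cumulIntegral_Ioi (hf : Integrable f μ) (a : ℝ) :
    ContinuousWithinAt (cumulIntegral μ f) (Ioi a) a := by
  refine tendsto_setIntegral_of_eventually_mem_iff hf (fun _ => measurableSet_Iic)
    measurableSet_Iic fun x => ?_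
  rcases le_or_gt x a with hx | hx
  · filter_upwards [self_mem_nhdsWithin] with u hu
    simp only [mem_Iic, hx, iff_true]
    exact hx.trans (le_of_lt hu)
  · filter_upwards [Ioo_mem_nhdsGT hx] with u hu
    simp only [mem_Iic, not_le.2 hx, iff_false, not_le]
    exact hu.2

theorem tendsto_cumulIntegral_nhdsLT [CompleteSpace E] (hf : Integrable f μ) (a : ℝ) :
    Tendsto (cumulIntegral μ f) (𝓝[<] a) (𝓝 (cumulIntegral μ f a - μ.real {a} • f a)) := by
  have hsplit : cumulIntegral μ f a = ∫ z in Iio a, f z ∂μ + μ.real {a} • f a := by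
    rw [cumulIntegral, ← Iio_union_right, setIntegral_union (by simp) (measurableSet_singleton a)
      hf.integrableOn hf.integrableOn, integral_singleton]
  rw [hsplit, add_sub_cancel_right]
  refine tendsto_setIntegral_of_eventually_mem_iff hf (fun _ => measurableSet_Iic)
    measurableSet_Iio fun x => ?_
  rcases lt_or_ge x a with hx | hx
  · filter_upwards [Ioo_mem_nhdsLT hx] with u hu
    simp only [mem_Iic, mem_Iio, hx, iff_true]
    exact hu.1.le
  · filter_upwards [self_mem_nhdsWithin] with u hu
    simp only [mem_Iic, mem_Iio, not_lt.2 hx, iff_false, not_le]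
    exact lt_of_lt_of_le hu hx

end CumulIntegral

section RealCumulIntegral

variable {μ : Measure ℝ} {f : ℝ → ℝ}

theorem exists_monotone_sub_eq_cumulIntegral (hf : Integrable f μ) :
    ∃ p q : ℝ → ℝ, Monotone p ∧ Monotone q ∧ cumulIntegral μ f = p - q := by
  refine ⟨cumulIntegral μ fun z => max (f z) 0, cumulIntegral μ fun z => max (-f z) 0,
    ?_, ?_, funext fun u => ?_⟩
  · exact fun u v huv => setIntegral_mono_set hf.pos_part.integrableOn
      (ae_of_all _ fun z => le_max_right _ _) (Iic_subset_Iic.2 huv).eventuallyLE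
  · exact fun u v huv => setIntegral_mono_set hf.neg_part.integrableOn
      (ae_of_all _ fun z => le_max_right _ _) (Iic_subset_Iic.2 huv).eventuallyLE
  · simp only [cumulIntegral, Pi.sub_apply]
    rw [← integral_sub hf.pos_part.integrableOn hf.neg_part.integrableOn]
    simp only [max_zero_sub_max_neg_zero_eq_self]

theorem measurable_cumulIntegral (hf : Integrable f μ) : Measurable (cumulIntegral μ f) := by
  obtain ⟨p, q, hp, hq, hpq⟩ := exists_monotone_sub_eq_cumulIntegral hf
  rw [hpq]
  exact hp.measurable.sub hq.measurable

theorem intervalIntegrable_cumulIntegral (hf : Integrable f μ) (a b : ℝ) :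
    IntervalIntegrable (cumulIntegral μ f) volume a b := by
  obtain ⟨p, q, hp, hq, hpq⟩ := exists_monotone_sub_eq_cumulIntegral hf
  rw [hpq]
  exact hp.intervalIntegrable.sub hq.intervalIntegrable

theorem cumulIntegral_sub_const_mul {g : ℝ → ℝ} (hf : Integrable f μ) (hg : Integrable g μ)
    (c u : ℝ) : cumulIntegral μ (fun z => f z - c * g z) u =
      cumulIntegral μ f u - c * cumulIntegral μ g u := by
  rw [cumulIntegral, integral_sub hf.integrableOn (hg.const_mul c).integrableOn,
    integral_const_mul]
  rfl

theorem eqOn_primitive_of_integral_equations {g : ℝ → ℝ} {lam ψ b : ℝ}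
    (hf : Integrable f μ) (hg : Integrable g μ)
    (hfeq : ∀ y ∈ Icc 0 b, f y = 1 + lam * ∫ t in (0:ℝ)..y, cumulIntegral μ f t)
    (hgeq : ∀ y ∈ Icc 0 b, g y = y + lam * ∫ t in (0:ℝ)..y, cumulIntegral μ g t) :
    EqOn (fun y => f y - ψ * g y)
      (fun u => 1 + -ψ * u + lam * ∫ t in (0:ℝ)..u,
        cumulIntegral μ (fun y => f y - ψ * g y) t) (Icc 0 b) := by
  intro u hu
  simp only [cumulIntegral_sub_const_mul hf hg]
  rw [hfeq u hu, hgeq u hu, intervalIntegral.integral_sub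
    (intervalIntegrable_cumulIntegral hf 0 u)
    ((intervalIntegrable_cumulIntegral hg 0 u).const_mul _), intervalIntegral.integral_const_mul]
  ring

end RealCumulIntegral

theorem ContinuousOn.integrable_restrict_Icc {μ : Measure ℝ} {f : ℝ → ℝ} {a b : ℝ}
    (hf : ContinuousOn f (Icc a b)) (hμ : μ (Icc a b) ≠ ∞) :
    Integrable f (μ.restrict (Icc a b)) := by
  have : IsFiniteMeasure (μ.restrict (Icc a b)) := isFiniteMeasure_restrict.2 hμ
  simpa [IntegrableOn] using hf.integrableOn_compact (μ := μ.restrict (Icc a b)) isCompact_Icc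

theorem setIntegral_Icc_eq_cumulIntegral_restrict {E : Type*} [NormedAddCommGroup E]
    [NormedSpace ℝ E] (μ : Measure ℝ) (f : ℝ → E) {a b u : ℝ} (hu : u ≤ b) :
    ∫ z in Icc a u, f z ∂μ = cumulIntegral (μ.restrict (Icc a b)) f u := by
  rw [cumulIntegral, Measure.restrict_restrict measurableSet_Iic]
  congr 2
  ext z
  simp only [mem_Icc, mem_inter_iff, mem_Iic]
  constructor
  · exact fun h => ⟨h.2, h.1, h.2.trans hu⟩
  · exact fun h => ⟨h.2.1, h.1⟩

theorem intervalIntegral_setIntegral_Icc_eq_cumulIntegral_restrict {E : Type*}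
    [NormedAddCommGroup E] [NormedSpace ℝ E] (μ : Measure ℝ) (f : ℝ → E) {b y : ℝ}
    (hy : y ∈ Icc 0 b) :
    ∫ t in (0:ℝ)..y, ∫ z in Icc 0 t, f z ∂μ =
      ∫ t in (0:ℝ)..y, cumulIntegral (μ.restrict (Icc 0 b)) f t :=
  intervalIntegral.integral_congr fun t ht =>
    setIntegral_Icc_eq_cumulIntegral_restrict μ f
      (by rw [uIcc_of_le hy.1] at ht; exact ht.2.trans hy.2)

theorem eq_of_hasDerivWithinAt_Ioi_of_eqOn_primitive {g F : ℝ → ℝ} {g' α β c b y : ℝ}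
    (hFm : Measurable F) (hFi : IntervalIntegrable F volume 0 y)
    (hFc : ContinuousWithinAt F (Ioi y) y) (hy : y ∈ Ico 0 b)
    (hg : EqOn g (fun u => α + β * u + c * ∫ t in (0:ℝ)..u, F t) (Icc 0 b))
    (hg' : HasDerivWithinAt g g' (Ioi y) y) : g' = β + c * F y := by
  have hprim : HasDerivWithinAt (fun u => ∫ t in (0:ℝ)..u, F t) (F y) (Ici y) y :=
    intervalIntegral.integral_hasDerivWithinAt_right hFi
      hFm.stronglyMeasurable.stronglyMeasurableAtFilter hFc
  have hmodel : HasDerivWithinAt (fun u => α + β * u + c * ∫ t in (0:ℝ)..u, F t)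
      (β + c * F y) (Ioi y) y := by
    have haff : HasDerivWithinAt (fun u => α + β * u) β (Ioi y) y := by
      simpa using ((hasDerivAt_id y).const_mul β).const_add α |>.hasDerivWithinAt
    exact haff.add ((hprim.mono Ioi_subset_Ici_self).const_mul c)
  have hgy : HasDerivWithinAt g (β + c * F y) (Ioi y) y := by
    refine hmodel.congr_of_eventuallyEq ?_ (hg ⟨hy.1, hy.2.le⟩)
    filter_upwards [Ioo_mem_nhdsGT hy.2] with u hu
    exact hg ⟨hy.1.trans hu.1.le, hu.2.le⟩
  exact (uniqueDiffWithinAt_Ioi y).eq_deriv _ hg' hgy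

theorem statement13_general (y₁ : ℝ) (hy₁ : 0 < y₁)
    (mhat : Measure ℝ)
    (hfin : mhat (Icc (0:ℝ) y₁) < ⊤)
    (lam : ℝ) (hlam : 0 < lam)
    (fN fD : ℝ → ℝ)
    (hfNc : ContinuousOn fN (Ici (0:ℝ))) (hfDc : ContinuousOn fD (Ici (0:ℝ)))
    (hfN : ∀ y : ℝ, 0 ≤ y →
      fN y = 1 + lam * ∫ y' in (0:ℝ)..y, (∫ z in Icc (0:ℝ) y', fN z ∂mhat))
    (hfD : ∀ y : ℝ, 0 ≤ y →
      fD y = y + lam * ∫ y' in (0:ℝ)..y, (∫ z in Icc (0:ℝ) y', fD z ∂mhat))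
    (hfDpos : ∀ z ∈ Icc (0:ℝ) y₁, 0 ≤ fD z)
    (ψlam : ℝ)
    (hψlam : ψlam = (lam * ∫ z in Icc (0:ℝ) y₁, fN z ∂mhat)
        / (1 + lam * ∫ z in Icc (0:ℝ) y₁, fD z ∂mhat))
    (φ : ℝ → ℝ) (hφ : ∀ y : ℝ, φ y = fN y - ψlam * fD y)
    (m₁ : ℝ) (hm₁ : m₁ = (mhat {y₁}).toReal) :
    ψlam = lam * ∫ z in Icc (0:ℝ) y₁, φ z ∂mhat ∧
    ∀ φ' : ℝ → ℝ, (∀ y : ℝ, 0 ≤ y → HasDerivWithinAt φ (φ' y) (Ioi y) y) →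
      Tendsto φ' (𝓝[<] y₁) (𝓝 (-(lam * m₁ * φ y₁))) := by
  have hfDnonneg := setIntegral_nonneg (μ := mhat) measurableSet_Icc hfDpos
  simp only [setIntegral_Icc_eq_cumulIntegral_restrict mhat _ le_rfl] at hψlam hfDnonneg ⊢
  -- on `[0, y₁]`, `G` is the cumulative integral for the finite measure `m̂|[0,y₁]`
  set ν := mhat.restrict (Icc 0 y₁)
  have hN : Integrable fN ν := (hfNc.mono Icc_subset_Ici_self).integrable_restrict_Icc hfin.ne
  have hD : Integrable fD ν := (hfDc.mono Icc_subset_Ici_self).integrable_restrict_Icc hfin.ne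
  have hφfun : φ = fun y => fN y - ψlam * fD y := funext hφ
  have hφi : Integrable φ ν := hφfun ▸ hN.sub (hD.const_mul ψlam)
  have hψ : ψlam = lam * cumulIntegral ν φ y₁ := by
    have hden : 0 < 1 + lam * cumulIntegral ν fD y₁ := by positivity
    rw [hφfun, cumulIntegral_sub_const_mul hN hD, hψlam]
    field_simp
    ring
  refine ⟨hψ, fun φ' hφ' => ?_⟩
  have heq : EqOn φ _ (Icc 0 y₁) := hφfun ▸ eqOn_primitive_of_integral_equations hN hD
    (fun y hy => by
      rw [hfN y hy.1, intervalIntegral_setIntegral_Icc_eq_cumulIntegral_restrict mhat fN hy])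
    (fun y hy => by
      rw [hfD y hy.1, intervalIntegral_setIntegral_Icc_eq_cumulIntegral_restrict mhat fD hy])
  have hderiv : ∀ y ∈ Ico 0 y₁, φ' y = -ψlam + lam * cumulIntegral ν φ y := fun y hy =>
    eq_of_hasDerivWithinAt_Ioi_of_eqOn_primitive (measurable_cumulIntegral hφi)
      (intervalIntegrable_cumulIntegral hφi 0 y) (continuousWithinAt_cumulIntegral_Ioi hφi y)
      hy heq (hφ' y hy.1)
  have hatom : ν.real {y₁} = m₁ := by
    rw [hm₁, measureReal_def, Measure.restrict_apply (measurableSet_singleton _),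
      singleton_inter_of_mem (right_mem_Icc.2 hy₁.le)]
  have hlim := ((tendsto_cumulIntegral_nhdsLT hφi y₁).const_mul lam).const_add (-ψlam)
  convert hlim.congr' ?_ using 2
  · rw [smul_eq_mul, hatom]
    linear_combination hψ
  · filter_upwards [Ioo_mem_nhdsLT hy₁] with y hy
    exact (hderiv y ⟨hy.1.le, hy.2⟩).symm

/-- with `ψ(λ) = (λ ∫_{[0,y₁]} f_N dm̂)/(1 + λ ∫_{[0,y₁]} f_D dm̂)`,
`φ = f_N − ψ(λ)·f_D` and `m₁ = m̂({y₁})`, one has `ψ(λ) = λ ∫_{[0,y₁]} φ dm̂`, and the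
right derivative of `φ` satisfies `lim_{y↑y₁} ∂_y⁺φ(y) = −λ·m₁·φ(y₁)`. -/
theorem statement13 (y₁ : ℝ) (hy₁ : 0 < y₁)
    (mhat : Measure ℝ)
    (hsupp : mhat (Ioi y₁) = 0) (hfin : mhat (Icc (0:ℝ) y₁) < ⊤)
    (lam : ℝ) (hlam : 0 < lam)
    (fN fD : ℝ → ℝ)
    (hfNc : ContinuousOn fN (Ici (0:ℝ))) (hfDc : ContinuousOn fD (Ici (0:ℝ)))
    (hfN : ∀ y : ℝ, 0 ≤ y →
      fN y = 1 + lam * ∫ y' in (0:ℝ)..y, (∫ z in Icc (0:ℝ) y', fN z ∂mhat))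
    (hfD : ∀ y : ℝ, 0 ≤ y →
      fD y = y + lam * ∫ y' in (0:ℝ)..y, (∫ z in Icc (0:ℝ) y', fD z ∂mhat))
    (hfDpos : ∀ z ∈ Icc (0:ℝ) y₁, 0 ≤ fD z)
    (ψlam : ℝ)
    (hψlam : ψlam = (lam * ∫ z in Icc (0:ℝ) y₁, fN z ∂mhat)
        / (1 + lam * ∫ z in Icc (0:ℝ) y₁, fD z ∂mhat))
    (φ : ℝ → ℝ) (hφ : ∀ y : ℝ, φ y = fN y - ψlam * fD y)
    (m₁ : ℝ) (hm₁ : m₁ = (mhat {y₁}).toReal) :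
    ψlam = lam * ∫ z in Icc (0:ℝ) y₁, φ z ∂mhat ∧
    ∀ φ' : ℝ → ℝ, (∀ y : ℝ, 0 ≤ y → HasDerivWithinAt φ (φ' y) (Ioi y) y) →
      Tendsto φ' (𝓝[<] y₁) (𝓝 (-(lam * m₁ * φ y₁))) :=
  statement13_general y₁ hy₁ mhat hfin lam hlam fN fD hfNc hfDc hfN hfD hfDpos ψlam hψlam φ hφ m₁
    hm₁
end
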